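/- arXiv:2211.16432 — 2 statements merged into one kernel-verified Lean document; each statement's English description precedes it below -/
import Mathlib

section
/- Let 𝒞 be a class of hypergraphs closed under taking disjoint unions of finitely many copies of any of its members, and suppose there is a constant c > 0 such that τ_g(H) ≤ (c + o(1))·n for every H ∈ 𝒞 on n vertices (i.e., for every ε > 0 there is N such that τ_g(H) ≤ (c+ε)n for all H ∈ 𝒞 with n ≥ N vertices). Then τ_g(H) ≤ c·n + 1 for every H ∈ 𝒞 on n vertices. -/
open scoped Classical

namespace TransversalGame

/-- A move `v` is legal w.r.t. the selected set `S` in the transversal game on a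
hypergraph with edge set `E`: `v` lies in some edge disjoint from `S`. -/
def Legal {V : Type*} (E : Finset (Finset V)) (S : Finset V) (v : V) : Prop :=
  ∃ e ∈ E, v ∈ e ∧ ∀ u ∈ S, u ∉ e

theorem Legal.not_mem {V : Type*} {E : Finset (Finset V)} {S : Finset V} {v : V}
    (h : Legal E S v) : v ∉ S := by
  rcases h with ⟨e, _, hv, hd⟩
  exact fun hvS => hd v hvS hv

/-- Value of the transversal game from position `S`; `b = true` means Edge-hitter
(the minimizer) to move. The game ends when the selected set is a transversal,
equivalently when no legal move exists. -/
noncomputable def val {V : Type*} [Fintype V] (E : Finset (Finset V)) (b : Bool) (S : Finset V) : ℕ :=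
  let L := Finset.univ.filter (fun v => Legal E S v)
  if h : L.Nonempty then
    have hL : L.attach.Nonempty := h.attach
    if b then
      1 + L.attach.inf' hL (fun v => val E false (insert v.1 S))
    else
      1 + L.attach.sup' hL (fun v => val E true (insert v.1 S))
  else 0
termination_by (Finset.univ \ S).card
decreasing_by
  all_goals {
    have hv : Legal E S v.1 := (Finset.mem_filter.mp v.2).2
    have hvS : v.1 ∉ S := hv.not_mem
    apply Finset.card_lt_card
    constructor
    · intro x hx
      simp only [Finset.mem_sdiff] at hx ⊢
      exact ⟨hx.1, fun hmem => hx.2 (Finset.mem_insert_of_mem hmem)⟩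
    · intro hsub
      have hvmem : v.1 ∈ Finset.univ \ S := by simp [hvS]
      have := hsub hvmem
      simp at this
  }

/-- Edge-hitter-start game transversal number starting from `A`. -/
noncomputable def tauG {V : Type*} [Fintype V] (E : Finset (Finset V)) (A : Finset V) : ℕ :=
  val E true A

/-- Staller-start game transversal number starting from `A`. -/
noncomputable def tauG' {V : Type*} [Fintype V] (E : Finset (Finset V)) (A : Finset V) : ℕ :=
  val E false A

end TransversalGame

/-- A bundled finite hypergraph. -/
structure TGHypergraph where
  V : Type
  [fin : Fintype V]
  E : Finset (Finset V)

attribute [instance] TGHypergraph.fin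

/-- The game transversal number of a bundled hypergraph (Edge-hitter starts,
no preselected vertices). -/
noncomputable def TGHypergraph.tau (H : TGHypergraph) : ℕ :=
  TransversalGame.tauG H.E (∅ : Finset H.V)

/-- The disjoint union of `m` copies of a hypergraph. -/
noncomputable def TGHypergraph.copies (H : TGHypergraph) (m : ℕ) : TGHypergraph where
  V := Fin m × H.V
  E := ((Finset.univ : Finset (Fin m)) ×ˢ H.E).image
        (fun p => p.2.image (fun v => (p.1, v)))


/-!
On the disjoint union `mH` of `m` copies of `H`, Staller answers each move of Edge-hitter in the
copy he has just played in, optimally for that copy, and opens another copy only when that one is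
finished. The continuation principle (a position with fewer surviving edges never lasts longer)
gives `τ_g ≤ τ_g' + 1` in every position, so each copy costs at least `τ_g(H) - 1` moves and
`m τ_g(H) ≤ τ_g(mH) + m`. Applying the asymptotic bound to `mH` for large `m` and dividing by
`m` gives `τ_g(H) ≤ (c + ε) n + 1` for every `ε > 0`.
-/

namespace TransversalGame

section Game

variable {V : Type*} [Fintype V] {E : Finset (Finset V)} {S T : Finset V} {v w : V}

lemma val_eq_zero (h : ¬∃ v, Legal E S v) (b : Bool) : val E b S = 0 := by
  rw [val]
  simp only [Finset.filter_nonempty_iff, Finset.mem_univ, true_and]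
  rw [dif_neg h]

lemma val_true_le (hv : Legal E S v) : val E true S ≤ 1 + val E false (insert v S) := by
  have hmem : v ∈ Finset.univ.filter (Legal E S) := by simpa using hv
  rw [val, dif_pos ⟨v, hmem⟩, if_pos rfl]
  exact Nat.add_le_add_left (Finset.inf'_le _ (Finset.mem_attach _ ⟨v, hmem⟩)) 1

lemma le_val_false (hv : Legal E S v) : 1 + val E true (insert v S) ≤ val E false S := by
  have hmem : v ∈ Finset.univ.filter (Legal E S) := by simpa using hv
  conv_rhs => rw [val, dif_pos ⟨v, hmem⟩, if_neg Bool.false_ne_true]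
  exact Nat.add_le_add_left
    (Finset.le_sup' (fun w => val E true (insert w.1 S)) (Finset.mem_attach _ ⟨v, hmem⟩)) 1

lemma exists_val_true_eq (h : ∃ v, Legal E S v) :
    ∃ v, Legal E S v ∧ val E true S = 1 + val E false (insert v S) := by
  have hne : (Finset.univ.filter (Legal E S)).Nonempty := by
    simpa [Finset.filter_nonempty_iff] using h
  obtain ⟨w, -, hw⟩ := Finset.exists_mem_eq_inf' hne.attach fun w => val E false (insert w.1 S)
  refine ⟨w.1, (Finset.mem_filter.mp w.2).2, ?_⟩
  rw [val, dif_pos hne, if_pos rfl, hw]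

lemma exists_val_false_eq (h : ∃ v, Legal E S v) :
    ∃ v, Legal E S v ∧ val E false S = 1 + val E true (insert v S) := by
  have hne : (Finset.univ.filter (Legal E S)).Nonempty := by
    simpa [Finset.filter_nonempty_iff] using h
  obtain ⟨w, -, hw⟩ := Finset.exists_mem_eq_sup' hne.attach fun w => val E true (insert w.1 S)
  refine ⟨w.1, (Finset.mem_filter.mp w.2).2, ?_⟩
  conv_lhs => rw [val, dif_pos hne, if_neg Bool.false_ne_true]
  rw [hw]

lemma card_compl_lt_of_legal (hv : Legal E S v) :
    (Finset.univ \ insert v S).card < (Finset.univ \ S).card := by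
  rw [Finset.sdiff_insert]
  exact Finset.card_erase_lt_of_mem (by simpa using hv.not_mem)

noncomputable def alive (E : Finset (Finset V)) (S : Finset V) : Finset (Finset V) :=
  E.filter fun e => ∀ u ∈ S, u ∉ e

lemma Legal.of_alive_subset (h : alive E T ⊆ alive E S) (hv : Legal E T v) : Legal E S v := by
  obtain ⟨e, he, hve, hd⟩ := hv
  obtain ⟨he, hd⟩ := Finset.mem_filter.mp (h (Finset.mem_filter.mpr ⟨he, hd⟩))
  exact ⟨e, he, hve, hd⟩

lemma alive_insert_subset (S : Finset V) (v : V) : alive E (insert v S) ⊆ alive E S := by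
  intro e
  simp only [alive, Finset.mem_filter, Finset.forall_mem_insert]
  rintro ⟨he, -, hd⟩
  exact ⟨he, hd⟩

lemma alive_insert_subset_alive_insert (h : alive E T ⊆ alive E S) :
    alive E (insert v T) ⊆ alive E (insert v S) := by
  intro e he
  simp only [alive, Finset.mem_filter, Finset.forall_mem_insert] at he ⊢
  obtain ⟨he, hve, hd⟩ := he
  exact ⟨he, hve, (Finset.mem_filter.mp (h (Finset.mem_filter.mpr ⟨he, hd⟩))).2⟩

lemma alive_subset_alive_insert_of_not_legal (h : alive E T ⊆ alive E S) (hw : ¬Legal E T w) :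
    alive E T ⊆ alive E (insert w S) := by
  intro e he
  obtain ⟨heE, hd⟩ := Finset.mem_filter.mp he
  simp only [alive, Finset.mem_filter, Finset.forall_mem_insert]
  exact ⟨heE, fun hwe => hw ⟨e, heE, hwe, hd⟩, (Finset.mem_filter.mp (h he)).2⟩

theorem val_le_val_of_alive_subset {S T : Finset V} (b : Bool) (h : alive E T ⊆ alive E S) :
    val E b T ≤ val E b S := by
  by_cases hT : ∃ v, Legal E T v
  swap
  · rw [val_eq_zero hT]
    exact Nat.zero_le _
  cases b
  · obtain ⟨v, hv, hval⟩ := exists_val_false_eq hT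
    have := val_le_val_of_alive_subset (T := insert v T) (S := insert v S) true
      (alive_insert_subset_alive_insert h)
    have := le_val_false (hv.of_alive_subset h)
    omega
  · obtain ⟨w, hw, hval⟩ := exists_val_true_eq (hT.imp fun _ hv => hv.of_alive_subset h)
    by_cases hwT : Legal E T w
    · have := val_true_le hwT
      have := val_le_val_of_alive_subset false (alive_insert_subset_alive_insert (v := w) h)
      omega
    -- Edge-hitter's best move `w` at `S` is illegal at `T`: play one more round at `T` instead.
    have hw' : alive E T ⊆ alive E (insert w S) := alive_subset_alive_insert_of_not_legal h hwT
    obtain ⟨v, hv⟩ := hT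
    have hvw : Legal E (insert w S) v := hv.of_alive_subset hw'
    have := val_true_le hv
    have := le_val_false hvw
    by_cases hTv : ∃ u, Legal E (insert v T) u
    · obtain ⟨u, hu, hval'⟩ := exists_val_false_eq hTv
      -- termination of the recursive call below, two moves deeper
      have hdec := (card_compl_lt_of_legal hu).trans (card_compl_lt_of_legal hv)
      have := val_le_val_of_alive_subset true ((alive_insert_subset _ u).trans
        (alive_insert_subset_alive_insert (v := v) hw'))
      omega
    · rw [val_eq_zero hTv] at *
      omega
termination_by (Finset.univ \ T).card
decreasing_by
  all_goals first | assumption | exact card_compl_lt_of_legal ‹_›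

lemma val_false_le_val_true_add_one : val E false S ≤ val E true S + 1 := by
  by_cases hS : ∃ v, Legal E S v
  · obtain ⟨v, -, hval⟩ := exists_val_false_eq hS
    have := val_le_val_of_alive_subset true (alive_insert_subset (E := E) S v)
    omega
  · rw [val_eq_zero hS]
    exact Nat.zero_le _

lemma val_true_le_val_false_add_one : val E true S ≤ val E false S + 1 := by
  by_cases hS : ∃ v, Legal E S v
  · obtain ⟨v, hv, hval⟩ := exists_val_false_eq hS
    have := val_true_le hv
    have := val_false_le_val_true_add_one (E := E) (S := insert v S)
    omega
  · rw [val_eq_zero hS]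
    exact Nat.zero_le _

end Game

section Copies

variable {V : Type*} [Fintype V] {E : Finset (Finset V)} {m : ℕ}

noncomputable def copiesEdges (E : Finset (Finset V)) (m : ℕ) : Finset (Finset (Fin m × V)) :=
  ((Finset.univ : Finset (Fin m)) ×ˢ E).image (fun p => p.2.image (fun v => (p.1, v)))

noncomputable def slice (i : Fin m) (T : Finset (Fin m × V)) : Finset V :=
  Finset.univ.filter fun v => (i, v) ∈ T

variable {i j : Fin m} {v : V} {T : Finset (Fin m × V)}

@[simp]
lemma mem_slice : v ∈ slice i T ↔ (i, v) ∈ T := by simp [slice]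

@[simp]
lemma slice_empty : slice i (∅ : Finset (Fin m × V)) = ∅ := by ext; simp

lemma legal_copiesEdges_iff : Legal (copiesEdges E m) T (i, v) ↔ Legal E (slice i T) v := by
  simp only [Legal, copiesEdges, Finset.mem_image, Finset.mem_product, Finset.mem_univ, true_and,
    Prod.exists, mem_slice]
  constructor
  · rintro ⟨-, ⟨j, e, he, rfl⟩, hv, hd⟩
    obtain ⟨u, hu, rfl, rfl⟩ : ∃ u ∈ e, j = i ∧ u = v := by simpa using hv
    exact ⟨e, he, hu, fun u hu hue => hd (j, u) hu (Finset.mem_image_of_mem _ hue)⟩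
  · rintro ⟨e, he, hv, hd⟩
    refine ⟨_, ⟨i, e, he, rfl⟩, Finset.mem_image_of_mem _ hv, ?_⟩
    rintro ⟨j, u⟩ hT hue
    obtain ⟨u, hu, rfl, rfl⟩ : ∃ u' ∈ e, i = j ∧ u' = u := by simpa using hue
    exact hd u hT hu

-- `val` moves by `insert` with the classical `DecidableEq`, so positions of the union must too.
noncomputable local instance : DecidableEq (Fin m × V) := Classical.decEq _

lemma slice_insert_self : slice i (insert (i, v) T) = insert v (slice i T) := by
  ext; simp

lemma slice_insert_of_ne (h : j ≠ i) : slice j (insert (i, v) T) = slice j T := by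
  ext; simp [h]

-- Truncated subtraction: finished copies contribute `0`.
noncomputable def potential (E : Finset (Finset V)) (T : Finset (Fin m × V)) : ℕ :=
  ∑ i, (val E true (slice i T) - 1)

lemma potential_insert (j : Fin m) (v : V) (T : Finset (Fin m × V)) :
    potential E (insert (j, v) T) + (val E true (slice j T) - 1) =
      potential E T + (val E true (insert v (slice j T)) - 1) := by
  unfold potential
  rw [← Finset.add_sum_erase _ _ (Finset.mem_univ j),
    ← Finset.add_sum_erase _ _ (Finset.mem_univ j), slice_insert_self,
    Finset.sum_congr rfl fun l hl => by rw [slice_insert_of_ne (Finset.ne_of_mem_erase hl)]]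
  ring

lemma potential_eq_zero (h : ∀ i, ¬∃ v, Legal E (slice i T) v) : potential E T = 0 :=
  Finset.sum_eq_zero fun i _ => by rw [val_eq_zero (h i), Nat.zero_sub]

/-- Up to the common term `val E true (slice i T) - 1`, copy `i` counts with its full value for
the player to move and every other copy with its Edge-hitter-start value minus one. -/
theorem val_slice_add_potential_le (b : Bool) (i : Fin m) (T : Finset (Fin m × V)) :
    val E b (slice i T) + potential E T ≤
      val (copiesEdges E m) b T + (val E true (slice i T) - 1) := by
  by_cases hT : ∃ p, Legal (copiesEdges E m) T p
  swap
  · have hslice : ∀ j, ¬∃ v, Legal E (slice j T) v :=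
      fun j ⟨v, hv⟩ => hT ⟨(j, v), legal_copiesEdges_iff.mpr hv⟩
    rw [val_eq_zero (hslice i), potential_eq_zero hslice]
    omega
  cases b
  · have unfinished : ∀ j, (∃ v, Legal E (slice j T) v) →
        val E false (slice j T) + potential E T ≤
          val (copiesEdges E m) false T + (val E true (slice j T) - 1) := by
      intro j hj
      obtain ⟨v, hv, hval⟩ := exists_val_false_eq hj
      have hv' : Legal (copiesEdges E m) T (j, v) := legal_copiesEdges_iff.mpr hv
      have := val_slice_add_potential_le true j (insert (j, v) T)
      rw [slice_insert_self] at this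
      have := potential_insert (E := E) j v T
      have := le_val_false hv'
      omega
    by_cases hi : ∃ v, Legal E (slice i T) v
    · exact unfinished i hi
    -- copy `i` is finished: Staller opens another copy `j`, losing at most one move there
    obtain ⟨⟨j, v⟩, hv⟩ := hT
    have := unfinished j ⟨v, legal_copiesEdges_iff.mp hv⟩
    have := val_true_le_val_false_add_one (E := E) (S := slice j T)
    rw [val_eq_zero hi]
    omega
  · obtain ⟨⟨j, v⟩, hv, hval⟩ := exists_val_true_eq hT
    have := val_slice_add_potential_le false j (insert (j, v) T)
    rw [slice_insert_self] at this
    have := potential_insert (E := E) j v T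
    have := val_true_le (legal_copiesEdges_iff.mp hv)
    omega
termination_by (Finset.univ \ T).card
decreasing_by all_goals exact card_compl_lt_of_legal ‹_›

end Copies

end TransversalGame

namespace TGHypergraph

lemma card_copies (H : TGHypergraph) (m : ℕ) :
    Fintype.card (H.copies m).V = m * Fintype.card H.V :=
  (Fintype.card_prod (Fin m) H.V).trans (by rw [Fintype.card_fin])

lemma mul_tau_le_tau_copies_add (H : TGHypergraph) (m : ℕ) :
    m * H.tau ≤ (H.copies m).tau + m := by
  rcases m.eq_zero_or_pos with rfl | hm
  · simp
  have h := TransversalGame.val_slice_add_potential_le (E := H.E) true ⟨0, hm⟩ ∅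
  simp only [TransversalGame.potential, TransversalGame.slice_empty, Finset.sum_const,
    Finset.card_univ, Fintype.card_fin, smul_eq_mul] at h
  change H.tau + m * (H.tau - 1) ≤ (H.copies m).tau + (H.tau - 1) at h
  rcases H.tau.eq_zero_or_pos with hτ | hτ
  · simp [hτ]
  · have := Nat.le_mul_of_pos_right m hτ
    rw [Nat.mul_sub_one] at h
    omega

lemma tau_le_of_tau_copies_le (H : TGHypergraph) {m : ℕ} (hm : 0 < m) {a : ℝ}
    (h : ((H.copies m).tau : ℝ) ≤ a * Fintype.card (H.copies m).V) :
    (H.tau : ℝ) ≤ a * Fintype.card H.V + 1 := by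
  have hcopies : (m : ℝ) * H.tau ≤ (H.copies m).tau + m := by
    exact_mod_cast H.mul_tau_le_tau_copies_add m
  rw [card_copies, Nat.cast_mul] at h
  have hm' : (0 : ℝ) < m := by exact_mod_cast hm
  refine le_of_mul_le_mul_left ?_ hm'
  nlinarith

end TGHypergraph

theorem tau_le_of_asymptotic_bound_general (𝒞 : Set TGHypergraph)
    (h_closed : ∀ H ∈ 𝒞, ∀ m : ℕ, 0 < m → H.copies m ∈ 𝒞)
    (c : ℝ)
    (h_asymp : ∀ ε : ℝ, 0 < ε → ∃ N : ℕ, ∀ H ∈ 𝒞, N ≤ Fintype.card H.V →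
      (H.tau : ℝ) ≤ (c + ε) * Fintype.card H.V) :
    ∀ H ∈ 𝒞, (H.tau : ℝ) ≤ c * Fintype.card H.V + 1 := by
  intro H hH
  rcases (Fintype.card H.V).eq_zero_or_pos with hn | hn
  · have hτ : H.tau = 0 := TransversalGame.val_eq_zero
      (fun ⟨v, _⟩ => (Fintype.card_eq_zero_iff.mp hn).false v) true
    simp [hτ, hn]
  have hε : ∀ ε : ℝ, 0 < ε → (H.tau : ℝ) ≤ (c + ε) * Fintype.card H.V + 1 := by
    intro ε hε
    obtain ⟨N, hN⟩ := h_asymp ε hε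
    refine H.tau_le_of_tau_copies_le N.succ_pos (hN _ (h_closed H hH _ N.succ_pos) ?_)
    rw [TGHypergraph.card_copies]
    exact N.le_succ.trans (Nat.le_mul_of_pos_right _ hn)
  refine le_of_forall_pos_le_add fun δ hδ => ?_
  have hn' : (0 : ℝ) < Fintype.card H.V := by exact_mod_cast hn
  calc (H.tau : ℝ) ≤ (c + δ / Fintype.card H.V) * Fintype.card H.V + 1 := hε _ (by positivity)
    _ = c * Fintype.card H.V + 1 + δ := by field_simp; ring

/-- If a class of hypergraphs is closed under taking disjoint unions of finitely
many copies, and τ_g(H) ≤ (c + o(1))·n holds over the class, then in fact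
τ_g(H) ≤ c·n + 1 for every member. -/
theorem tau_le_of_asymptotic_bound (𝒞 : Set TGHypergraph)
    (h_closed : ∀ H ∈ 𝒞, ∀ m : ℕ, 0 < m → H.copies m ∈ 𝒞)
    (c : ℝ) (hc : 0 < c)
    (h_asymp : ∀ ε : ℝ, 0 < ε → ∃ N : ℕ, ∀ H ∈ 𝒞, N ≤ Fintype.card H.V →
      (H.tau : ℝ) ≤ (c + ε) * Fintype.card H.V) :
    ∀ H ∈ 𝒞, (H.tau : ℝ) ≤ c * Fintype.card H.V + 1 :=
  tau_le_of_asymptotic_bound_general 𝒞 h_closed c h_asymp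
end

section
/- If H_k denotes the disjoint union of k ≥ 1 copies of the cycle C_7, then the game total domination number satisfies γ_tg(H_k) = 4k + 1. -/
/-!
Multiplication by `4` maps every open neighbourhood `{x - 1, x + 1}` of `C₇ = ℤ/7` onto an edge
`{y, y + 1}`. On one copy of `C₇` the game is therefore played with the edges of a `7`-cycle, each
of which has to cover a new vertex, and the state of the copy is its set of covered vertices.

Upper bound: after an arbitrary first move, Dominator keeps the covered set of every copy an arc of
even length or the whole cycle, answering in the copy Staller played in unless Staller completed it.
The potential counting `2` for an arc of length at most `2`, `1` for a longer proper arc and `0` for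
a full cycle is `2k` after the first move and drops by at least one in every round of a Staller
move and a Dominator reply, so at most `1 + 2 · 2k` moves are played.

Lower bound: Staller answers every Dominator move so that the potential counting `2` for an
untouched copy, `1` for a covered set of at most three vertices and `0` otherwise drops by at most
one per round while the game goes on; starting from `2k` this forces `2 · 2k + 1` moves.
-/

open scoped Classical

namespace GameTD

/-- A move `v` is legal w.r.t. selected set `S` in the total domination game:
`v` totally dominates some vertex not yet totally dominated. -/
def Legal {V : Type*} (G : SimpleGraph V) (S : Finset V) (v : V) : Prop :=
  ∃ w, G.Adj v w ∧ ∀ u ∈ S, ¬ G.Adj u w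

theorem Legal.not_mem {V : Type*} {G : SimpleGraph V} {S : Finset V} {v : V}
    (h : Legal G S v) : v ∉ S := by
  rcases h with ⟨w, hadj, hw⟩
  intro hv
  exact hw v hv hadj

/-- The value of the total domination game from position `S`, with `b = true`
meaning Dominator (the minimizer) to move. The game ends when no legal move exists. -/
noncomputable def val {V : Type*} [Fintype V] (G : SimpleGraph V) (b : Bool) (S : Finset V) : ℕ :=
  let L := Finset.univ.filter (fun v => Legal G S v)
  if h : L.Nonempty then
    have hL : L.attach.Nonempty := h.attach
    if b then
      1 + L.attach.inf' hL (fun v => val G false (insert v.1 S))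
    else
      1 + L.attach.sup' hL (fun v => val G true (insert v.1 S))
  else 0
termination_by (Finset.univ \ S).card
decreasing_by
  all_goals {
    have hv : Legal G S v.1 := by
      have := v.2
      try simp only [Finset.mem_filter] at this
      exact (Finset.mem_filter.mp v.2).2
    have hvS : v.1 ∉ S := hv.not_mem
    apply Finset.card_lt_card
    constructor
    · intro x hx
      simp only [Finset.mem_sdiff] at hx ⊢
      exact ⟨hx.1, fun hmem => hx.2 (Finset.mem_insert_of_mem hmem)⟩
    · intro hsub
      have : v.1 ∈ Finset.univ \ S := by
        simp [hvS]
      have := hsub this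
      simp at this
  }

/-- The game total domination number: Dominator starts from the empty position. -/
noncomputable def gammaTG {V : Type*} [Fintype V] (G : SimpleGraph V) : ℕ :=
  val G true ∅

end GameTD

/-- The disjoint union of `k` copies of the 7-cycle: vertex set `Fin k × Fin 7`,
with two vertices adjacent iff they lie in the same copy and are adjacent in `C_7`. -/
def disjointC7 (k : ℕ) : SimpleGraph (Fin k × Fin 7) :=
  SimpleGraph.fromRel (fun p q => p.1 = q.1 ∧ (SimpleGraph.cycleGraph 7).Adj p.2 q.2)


open Finset Function SimpleGraph

namespace GameTD

def IsOver {V : Type*} (G : SimpleGraph V) (S : Finset V) : Prop := ∀ v, ¬ Legal G S v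

theorem Legal.card_insert {V : Type*} [DecidableEq V] {G : SimpleGraph V} {S : Finset V} {v : V}
    (hv : Legal G S v) : #(insert v S) = #S + 1 :=
  card_insert_of_notMem hv.not_mem

section Val

variable {V : Type*} [Fintype V] {G : SimpleGraph V} {S : Finset V} {v : V}

theorem filter_legal_nonempty_iff :
    (univ.filter fun v => Legal G S v).Nonempty ↔ ¬ IsOver G S := by
  simp [Finset.Nonempty, IsOver]

theorem val_of_isOver (b : Bool) (h : IsOver G S) : val G b S = 0 := by
  rw [val, dif_neg (filter_legal_nonempty_iff.not_left.mpr h)]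

/- `val` inserts moves with the classical `DecidableEq V` instance; the `convert`s below identify
it with the one in context. -/
variable [DecidableEq V]

theorem val_true_le (hv : Legal G S v) : val G true S ≤ 1 + val G false (insert v S) := by
  have hmem : v ∈ univ.filter fun v => Legal G S v := mem_filter.2 ⟨mem_univ v, hv⟩
  rw [val, dif_pos ⟨v, hmem⟩, if_pos rfl]
  convert Nat.add_le_add_left (inf'_le _ (mem_attach _ ⟨v, hmem⟩)) 1

theorem le_val_false (hv : Legal G S v) : 1 + val G true (insert v S) ≤ val G false S := by
  have hmem : v ∈ univ.filter fun v => Legal G S v := mem_filter.2 ⟨mem_univ v, hv⟩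
  conv_rhs => rw [val, dif_pos ⟨v, hmem⟩, if_neg Bool.false_ne_true]
  convert Nat.add_le_add_left (le_sup' _ (mem_attach _ ⟨v, hmem⟩)) 1
  exact congrArg _ (by ext; simp)

theorem val_false_le {c : ℕ} (h : ∀ v, Legal G S v → 1 + val G true (insert v S) ≤ c) :
    val G false S ≤ c := by
  rw [val]
  simp only [Bool.false_eq_true, ↓reduceIte]
  split_ifs with hne
  · obtain ⟨v, hv⟩ := hne
    have hc := h v (mem_filter.1 hv).2
    refine Nat.add_le_of_le_sub' (by omega) (sup'_le _ _ fun w _ => Nat.le_sub_of_add_le' ?_)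
    convert h w (mem_filter.1 w.2).2 using 3
    ext; simp
  · exact Nat.zero_le c

theorem le_val_true {c : ℕ} (hS : ¬ IsOver G S)
    (h : ∀ v, Legal G S v → c ≤ 1 + val G false (insert v S)) : c ≤ val G true S := by
  rw [val, dif_pos (filter_legal_nonempty_iff.mpr hS), if_pos rfl]
  refine Nat.sub_le_iff_le_add'.1 (le_inf' _ _ fun w _ => Nat.sub_le_iff_le_add'.2 ?_)
  convert h w (mem_filter.1 w.2).2 using 3
  ext; simp

end Val

section Potential

variable {V : Type*} [Fintype V] [DecidableEq V] {G : SimpleGraph V}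

theorem val_false_le_of_potential (P : Finset V → Prop) (φ : Finset V → ℕ)
    (hreply : ∀ S, P S → ∀ v, Legal G S v →
      (IsOver G (insert v S) ∧ 1 ≤ φ S) ∨
        ∃ u, Legal G (insert v S) u ∧ P (insert u (insert v S)) ∧
          φ (insert u (insert v S)) + 1 ≤ φ S)
    (S : Finset V) (hS : P S) : val G false S ≤ 2 * φ S := by
  refine val_false_le fun v hv => ?_
  rcases hreply S hS v hv with ⟨hover, hφ⟩ | ⟨u, hu, hP, hφ⟩
  · rw [val_of_isOver true hover]
    omega
  · have := val_true_le hu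
    have := val_false_le_of_potential P φ hreply _ hP
    omega
termination_by Fintype.card V - #S
decreasing_by
  have := card_le_univ (insert u (insert v S))
  rw [hu.card_insert, hv.card_insert] at this ⊢
  omega

theorem le_val_true_of_potential (ψ : Finset V → ℕ)
    (hreply : ∀ S v, Legal G S v → ψ S = 0 ∨
      ∃ u, Legal G (insert v S) u ∧ ¬ IsOver G (insert u (insert v S)) ∧
        ψ S ≤ ψ (insert u (insert v S)) + 1)
    (S : Finset V) (hS : ¬ IsOver G S) : 2 * ψ S + 1 ≤ val G true S := by
  refine le_val_true hS fun v hv => ?_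
  rcases hreply S v hv with hψ | ⟨u, hu, hover, hψ⟩
  · omega
  · have := le_val_false hu
    have := le_val_true_of_potential ψ hreply _ hover
    omega
termination_by Fintype.card V - #S
decreasing_by
  have := card_le_univ (insert u (insert v S))
  rw [hu.card_insert, hv.card_insert] at this ⊢
  omega

end Potential

end GameTD

theorem Function.forall_update_of_forall {ι α : Type*} [DecidableEq ι] {p : α → Prop} {f : ι → α}
    (hf : ∀ j, p (f j)) {i : ι} {b : α} (hb : p b) : ∀ j, p (update f i b j) :=
  (forall_update_iff f fun _ y => p y).2 ⟨hb, fun j _ => hf j⟩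

theorem Finset.sum_comp_update_add {ι α M : Type*} [Fintype ι] [DecidableEq ι] [AddCommMonoid M]
    (f : α → M) (D : ι → α) (i : ι) (b : α) :
    ∑ j, f (update D i b j) + f (D i) = ∑ j, f (D j) + f b := by
  rw [← add_sum_erase _ _ (mem_univ i), ← add_sum_erase _ _ (mem_univ i), update_self,
    sum_congr rfl fun j hj => by rw [update_of_ne (ne_of_mem_erase hj)]]
  abel

section DisjointCopies

open GameTD

variable {ι W : Type*} [DecidableEq ι] [Fintype W] [DecidableEq W] (H : SimpleGraph W)
  [DecidableRel H.Adj]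

def dominatedIn (S : Finset (ι × W)) (i : ι) : Finset W :=
  univ.filter fun z => ∃ y, (i, y) ∈ S ∧ H.Adj y z

variable {H}

@[simp]
theorem dominatedIn_empty : dominatedIn H (∅ : Finset (ι × W)) = fun _ => ∅ := by
  ext i z
  simp [dominatedIn]

theorem dominatedIn_insert (S : Finset (ι × W)) (i : ι) (x : W) :
    dominatedIn H (insert (i, x) S) =
      update (dominatedIn H S) i (dominatedIn H S i ∪ H.neighborFinset x) := by
  ext j z
  rcases eq_or_ne j i with rfl | hj
  · simp [dominatedIn, or_and_right, exists_or, or_comm]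
  · simp [dominatedIn, hj]

theorem legal_bot_boxProd_iff {S : Finset (ι × W)} {i : ι} {x : W} :
    Legal ((⊥ : SimpleGraph ι) □ H) S (i, x) ↔ ¬ H.neighborFinset x ⊆ dominatedIn H S i := by
  simp only [not_subset, mem_neighborFinset, dominatedIn, mem_filter, mem_univ, true_and,
    not_exists, not_and]
  constructor
  · rintro ⟨⟨j, z⟩, hadj, hz⟩
    obtain ⟨hxz, rfl⟩ : H.Adj x z ∧ i = j := by simpa [boxProd_adj] using hadj
    exact ⟨z, hxz, fun y hy hyz => hz _ hy (by simp [boxProd_adj, hyz])⟩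
  · rintro ⟨z, hxz, hz⟩
    refine ⟨(i, z), by simp [boxProd_adj, hxz], fun ⟨j, y⟩ hy hadj => ?_⟩
    obtain ⟨hyz, rfl⟩ : H.Adj y z ∧ j = i := by simpa [boxProd_adj] using hadj
    exact hz y hy hyz

theorem isOver_bot_boxProd_iff {S : Finset (ι × W)} :
    IsOver ((⊥ : SimpleGraph ι) □ H) S ↔ ∀ i x, H.neighborFinset x ⊆ dominatedIn H S i := by
  simp [IsOver, legal_bot_boxProd_iff]

end DisjointCopies

namespace CycleSeven

open GameTD

/-- After the relabelling `z ↦ 4 z` of the header, these are the arcs of even length and the whole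
cycle. -/
def IsEvenArc (D : Finset (Fin 7)) : Prop :=
  D = ∅ ∨ D = univ ∨ ∃ a : Fin 7,
    D = {a, a + 2} ∨ D = {a, a + 2, a + 4, a + 6} ∨ D = {a, a + 2, a + 4, a + 6, a + 8, a + 10}

instance : DecidablePred IsEvenArc := fun _ => inferInstanceAs (Decidable (_ ∨ _))

def upperRounds (D : Finset (Fin 7)) : ℕ := if #D ≤ 2 then 2 else if D = univ then 0 else 1

def lowerRounds (D : Finset (Fin 7)) : ℕ := if D = ∅ then 2 else if #D ≤ 3 then 1 else 0

theorem isEvenArc_empty : IsEvenArc ∅ := by decide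

theorem isEvenArc_univ : IsEvenArc univ := by decide

theorem isEvenArc_pair (x : Fin 7) : IsEvenArc {x - 1, x + 1} := by
  revert x
  decide

theorem upperRounds_empty : upperRounds ∅ = 2 := by decide

theorem upperRounds_univ : upperRounds univ = 0 := by decide

theorem upperRounds_pair (x : Fin 7) : upperRounds {x - 1, x + 1} = 2 := by
  revert x
  decide

theorem lowerRounds_empty : lowerRounds ∅ = 2 := by decide

theorem lowerRounds_univ : lowerRounds univ = 0 := by decide

set_option maxRecDepth 2000

theorem forall_pair_subset_iff {D : Finset (Fin 7)} :
    (∀ x : Fin 7, {x - 1, x + 1} ⊆ D) ↔ D = univ := by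
  revert D
  decide

theorem IsEvenArc.exists_reply {D : Finset (Fin 7)} (hD : IsEvenArc D) {x : Fin 7}
    (hx : ¬ {x - 1, x + 1} ⊆ D) :
    (D ∪ {x - 1, x + 1} = univ ∧ 1 ≤ upperRounds D) ∨
      ∃ u : Fin 7, ¬ {u - 1, u + 1} ⊆ D ∪ {x - 1, x + 1} ∧
        IsEvenArc (D ∪ {x - 1, x + 1} ∪ {u - 1, u + 1}) ∧
        upperRounds (D ∪ {x - 1, x + 1} ∪ {u - 1, u + 1}) + 1 ≤ upperRounds D := by
  revert D x
  decide

theorem IsEvenArc.exists_move {D : Finset (Fin 7)} (hD : IsEvenArc D) (hne : D ≠ univ) :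
    ∃ u : Fin 7, ¬ {u - 1, u + 1} ⊆ D ∧ IsEvenArc (D ∪ {u - 1, u + 1}) ∧
      upperRounds (D ∪ {u - 1, u + 1}) ≤ upperRounds D := by
  revert D
  decide

theorem lowerRounds_exists_reply {D : Finset (Fin 7)} {x : Fin 7} (hx : ¬ {x - 1, x + 1} ⊆ D) :
    (D ∪ {x - 1, x + 1} = univ ∧ lowerRounds D = 0) ∨
      ∃ u : Fin 7, ¬ {u - 1, u + 1} ⊆ D ∪ {x - 1, x + 1} ∧
        lowerRounds D ≤ lowerRounds (D ∪ {x - 1, x + 1} ∪ {u - 1, u + 1}) + 1 ∧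
        (D ∪ {x - 1, x + 1} ∪ {u - 1, u + 1} = univ → lowerRounds D = 0) := by
  revert D x
  decide

theorem lowerRounds_exists_move {D : Finset (Fin 7)} (hne : D ≠ univ) :
    ∃ u : Fin 7, ¬ {u - 1, u + 1} ⊆ D ∧ lowerRounds D ≤ lowerRounds (D ∪ {u - 1, u + 1}) + 1 ∧
      (D ∪ {u - 1, u + 1} = univ → lowerRounds D = 0) := by
  revert D
  decide

variable {ι : Type*} [DecidableEq ι]

local notation "𝒢" => SimpleGraph.boxProd (⊥ : SimpleGraph ι) (cycleGraph 7)

local notation "𝒟" => dominatedIn (cycleGraph 7)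

theorem legal_iff {S : Finset (ι × Fin 7)} {i : ι} {x : Fin 7} :
    Legal 𝒢 S (i, x) ↔ ¬ {x - 1, x + 1} ⊆ 𝒟 S i := by
  rw [legal_bot_boxProd_iff, cycleGraph_neighborFinset]

theorem isOver_iff {S : Finset (ι × Fin 7)} : IsOver 𝒢 S ↔ ∀ i, 𝒟 S i = univ := by
  simp only [isOver_bot_boxProd_iff, cycleGraph_neighborFinset, forall_pair_subset_iff]

theorem dominatedIn_insert_pair (S : Finset (ι × Fin 7)) (i : ι) (x : Fin 7) :
    𝒟 (insert (i, x) S) = update (𝒟 S) i (𝒟 S i ∪ {x - 1, x + 1}) := by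
  rw [dominatedIn_insert, cycleGraph_neighborFinset]

theorem dominatedIn_insert_pair_self (S : Finset (ι × Fin 7)) (i : ι) (x : Fin 7) :
    𝒟 (insert (i, x) S) i = 𝒟 S i ∪ {x - 1, x + 1} := by
  rw [dominatedIn_insert_pair, update_self]

variable [Fintype ι]

def potential (f : Finset (Fin 7) → ℕ) (S : Finset (ι × Fin 7)) : ℕ := ∑ i, f (𝒟 S i)

theorem potential_empty (f : Finset (Fin 7) → ℕ) :
    potential f (∅ : Finset (ι × Fin 7)) = Fintype.card ι * f ∅ := by
  simp [potential]

theorem potential_insert (f : Finset (Fin 7) → ℕ) (S : Finset (ι × Fin 7)) (i : ι) (x : Fin 7) :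
    potential f (insert (i, x) S) + f (𝒟 S i) = potential f S + f (𝒟 (insert (i, x) S) i) := by
  rw [potential, potential, dominatedIn_insert_pair, update_self]
  exact sum_comp_update_add f _ i _

theorem dominator_reply (S : Finset (ι × Fin 7)) (hS : ∀ j, IsEvenArc (𝒟 S j))
    (v : ι × Fin 7) (hv : Legal 𝒢 S v) :
    (IsOver 𝒢 (insert v S) ∧ 1 ≤ potential upperRounds S) ∨
      ∃ u, Legal 𝒢 (insert v S) u ∧ (∀ j, IsEvenArc (𝒟 (insert u (insert v S)) j)) ∧
        potential upperRounds (insert u (insert v S)) + 1 ≤ potential upperRounds S := by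
  obtain ⟨i, x⟩ := v
  have hΦ' := potential_insert upperRounds S i x
  rw [dominatedIn_insert_pair_self] at hΦ'
  rcases (hS i).exists_reply (legal_iff.1 hv) with ⟨hfull, hφ⟩ | ⟨u, hu, hP, hφ⟩
  · rw [hfull, upperRounds_univ] at hΦ'
    by_cases hover : IsOver 𝒢 (insert (i, x) S)
    · exact .inl ⟨hover, by omega⟩
    have hS' : ∀ j, IsEvenArc (𝒟 (insert (i, x) S) j) := by
      rw [dominatedIn_insert_pair, hfull]
      exact forall_update_of_forall hS isEvenArc_univ
    obtain ⟨j, hj⟩ := not_forall.1 (isOver_iff.not.1 hover)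
    obtain ⟨u, hu, hP, hφu⟩ := (hS' j).exists_move hj
    have hΦ'' := potential_insert upperRounds (insert (i, x) S) j u
    rw [dominatedIn_insert_pair_self] at hΦ''
    refine .inr ⟨(j, u), legal_iff.2 hu, ?_, by omega⟩
    rw [dominatedIn_insert_pair]
    exact forall_update_of_forall hS' hP
  · have hΦ'' := potential_insert upperRounds (insert (i, x) S) i u
    simp only [dominatedIn_insert_pair_self] at hΦ''
    refine .inr ⟨(i, u), legal_iff.2 (by rwa [dominatedIn_insert_pair_self]), ?_, by omega⟩
    rw [dominatedIn_insert_pair, dominatedIn_insert_pair_self, dominatedIn_insert_pair S,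
      update_idem]
    exact forall_update_of_forall hS hP

theorem potential_lowerRounds_of_isOver {S : Finset (ι × Fin 7)} (h : IsOver 𝒢 S) :
    potential lowerRounds S = 0 := by
  simp [potential, isOver_iff.1 h, lowerRounds_univ]

/-- `T` is the position after a round of play from `S` whose Staller move was in copy `j`, and `a`
is the contribution of copy `j` to the potential of `S`. -/
theorem potential_lowerRounds_eq_zero_or {S T : Finset (ι × Fin 7)} {j : ι} {a : ℕ}
    (hsum : potential lowerRounds T + a = potential lowerRounds S + lowerRounds (𝒟 T j))
    (hle : a ≤ lowerRounds (𝒟 T j) + 1) (hfull : 𝒟 T j = univ → a = 0) :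
    potential lowerRounds S = 0 ∨
      ¬ IsOver 𝒢 T ∧ potential lowerRounds S ≤ potential lowerRounds T + 1 := by
  by_cases hT : 𝒟 T j = univ
  · rw [hT, lowerRounds_univ, hfull hT] at hsum
    by_cases hover : IsOver 𝒢 T
    · rw [potential_lowerRounds_of_isOver hover] at hsum
      exact .inl hsum.symm
    · exact .inr ⟨hover, by omega⟩
  · exact .inr ⟨fun h => hT (isOver_iff.1 h j), by omega⟩

theorem staller_reply (S : Finset (ι × Fin 7)) (v : ι × Fin 7) (hv : Legal 𝒢 S v) :
    potential lowerRounds S = 0 ∨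
      ∃ u, Legal 𝒢 (insert v S) u ∧ ¬ IsOver 𝒢 (insert u (insert v S)) ∧
        potential lowerRounds S ≤ potential lowerRounds (insert u (insert v S)) + 1 := by
  obtain ⟨i, x⟩ := v
  have hΨ' := potential_insert lowerRounds S i x
  rcases lowerRounds_exists_reply (legal_iff.1 hv) with ⟨hfull, hψ⟩ | ⟨u, hu, hψ, hψfull⟩
  · rw [dominatedIn_insert_pair_self, hfull, lowerRounds_univ, hψ] at hΨ'
    by_cases hover : IsOver 𝒢 (insert (i, x) S)
    · rw [potential_lowerRounds_of_isOver hover] at hΨ'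
      exact .inl (by omega)
    obtain ⟨j, hj⟩ := not_forall.1 (isOver_iff.not.1 hover)
    obtain ⟨u, hu, hψu, hfullu⟩ := lowerRounds_exists_move hj
    have hΨ'' := potential_insert lowerRounds (insert (i, x) S) j u
    rw [← dominatedIn_insert_pair_self] at hψu hfullu
    exact (potential_lowerRounds_eq_zero_or (by omega) hψu hfullu).imp_right
      fun h => ⟨(j, u), legal_iff.2 hu, h⟩
  · have hΨ'' := potential_insert lowerRounds (insert (i, x) S) i u
    rw [← dominatedIn_insert_pair_self S] at hu hψ hψfull
    rw [← dominatedIn_insert_pair_self (insert (i, x) S)] at hψ hψfull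
    exact (potential_lowerRounds_eq_zero_or (by omega) hψ hψfull).imp_right
      fun h => ⟨(i, u), legal_iff.2 hu, h⟩

theorem gammaTG_bot_boxProd_cycleGraph_seven_le : gammaTG 𝒢 ≤ 4 * Fintype.card ι + 1 := by
  by_cases hover : IsOver 𝒢 ∅
  · rw [gammaTG, val_of_isOver true hover]
    omega
  obtain ⟨⟨i, x⟩, hv⟩ := not_forall_not.1 hover
  have hP : ∀ j, IsEvenArc (𝒟 (insert (i, x) (∅ : Finset (ι × Fin 7))) j) := by
    rw [dominatedIn_insert_pair, dominatedIn_empty, empty_union]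
    exact forall_update_of_forall (fun _ => isEvenArc_empty) (isEvenArc_pair x)
  have hΦ := potential_insert upperRounds ∅ i x
  rw [dominatedIn_insert_pair_self, potential_empty, dominatedIn_empty, empty_union,
    upperRounds_empty, upperRounds_pair] at hΦ
  have := val_false_le_of_potential _ _ dominator_reply _ hP
  have := val_true_le hv
  rw [gammaTG]
  omega

theorem le_gammaTG_bot_boxProd_cycleGraph_seven [Nonempty ι] :
    4 * Fintype.card ι + 1 ≤ gammaTG 𝒢 := by
  have hover : ¬ IsOver 𝒢 ∅ := by
    simp [isOver_iff, eq_comm (a := ∅), univ_eq_empty_iff]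
  have := le_val_true_of_potential _ staller_reply ∅ hover
  rw [potential_empty, lowerRounds_empty] at this
  rw [gammaTG]
  omega

theorem gammaTG_bot_boxProd_cycleGraph_seven [Nonempty ι] :
    gammaTG 𝒢 = 4 * Fintype.card ι + 1 :=
  le_antisymm gammaTG_bot_boxProd_cycleGraph_seven_le le_gammaTG_bot_boxProd_cycleGraph_seven

end CycleSeven

theorem disjointC7_eq_boxProd (k : ℕ) :
    disjointC7 k = (⊥ : SimpleGraph (Fin k)) □ cycleGraph 7 := by
  ext ⟨i, x⟩ ⟨j, y⟩
  simp only [disjointC7, fromRel_adj, boxProd_adj, bot_adj, false_and, false_or, ne_eq,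
    Prod.mk.injEq]
  constructor
  · rintro ⟨-, ⟨rfl, h⟩ | ⟨rfl, h⟩⟩
    exacts [⟨h, rfl⟩, ⟨h.symm, rfl⟩]
  · rintro ⟨h, rfl⟩
    exact ⟨fun ⟨_, hxy⟩ => h.ne hxy, .inl ⟨rfl, h⟩⟩

/-- For the disjoint union `H_k` of `k ≥ 1` copies of `C_7`, γ_tg(H_k) = 4k + 1. -/
theorem gammaTG_disjointC7 (k : ℕ) (hk : 1 ≤ k) :
    GameTD.gammaTG (disjointC7 k) = 4 * k + 1 := by
  have : Nonempty (Fin k) := ⟨⟨0, hk⟩⟩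
  rw [disjointC7_eq_boxProd, CycleSeven.gammaTG_bot_boxProd_cycleGraph_seven, Fintype.card_fin]
end
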